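/- arXiv:2312.11236 — 7 statements merged into one kernel-verified Lean document; each statement's English description precedes it below -/
import Mathlib

section
/- For every integer K ≥ 1, the set of nonnegative integers expressible as R(k) + j·q with 0 ≤ k < q and 0 ≤ j < K equals {0, 1, …, (K−1)·q − 1} ∪ {b + (K−1)·q}. In particular, after K phases of q rounds each, in which in round i (0 ≤ i < K·q) the block R(i mod q) + ⌊i/q⌋·q is received (blocks with negative index being virtual), a processor has received all blocks 0,…,(K−1)q−1 together with the block b + (K−1)q, where b is the first nonnegative block it receives. -/
/-- after `K` phases of `q` rounds each, the nonnegative blocks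
received are exactly `{0, …, (K-1)q - 1} ∪ {b + (K-1)q}`. -/
theorem phases_receive_all_blocks
    (q : ℕ) (hq : 1 ≤ q) (b : ℕ) (hb : b < q)
    (R : ℕ → ℤ)
    (hR : {z : ℤ | ∃ k, k < q ∧ R k = z} =
      (Set.Icc (-(q : ℤ)) (-1) \ {(b : ℤ) - (q : ℤ)}) ∪ {(b : ℤ)})
    (K : ℕ) (hK : 1 ≤ K) :
    {n : ℤ | 0 ≤ n ∧ ∃ k, k < q ∧ ∃ j, j < K ∧ n = R k + (j : ℤ) * (q : ℤ)} =
      Set.Ico (0 : ℤ) (((K : ℤ) - 1) * (q : ℤ)) ∪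
        {(b : ℤ) + ((K : ℤ) - 1) * (q : ℤ)} := by
  have hq' : (0:ℤ) < (q:ℤ) := by exact_mod_cast hq
  have hb' : (b:ℤ) < (q:ℤ) := by exact_mod_cast hb
  have hS : ∀ z : ℤ, (∃ k, k < q ∧ R k = z) ↔
      ((-(q:ℤ) ≤ z ∧ z ≤ -1) ∧ z ≠ (b:ℤ) - q) ∨ z = (b:ℤ) := by
    intro z
    have := Set.ext_iff.mp hR z
    simp only [Set.mem_diff, Set.mem_Icc, Set.mem_setOf_eq, Set.mem_union,
      Set.mem_singleton_iff] at this
    tauto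
  ext n
  simp only [Set.mem_setOf_eq, Set.mem_union, Set.mem_Ico, Set.mem_singleton_iff]
  constructor
  · rintro ⟨hn, k, hk, j, hj, rfl⟩
    have hjK : (j:ℤ) ≤ (K:ℤ) - 1 := by
      have : (j:ℤ) < (K:ℤ) := by exact_mod_cast hj
      linarith
    rcases (hS (R k)).mp ⟨k, hk, rfl⟩ with ⟨⟨h1, h2⟩, hne⟩ | hz
    · left
      refine ⟨hn, ?_⟩
      nlinarith
    · rw [hz] at hn ⊢
      by_cases hjt : (j:ℤ) = (K:ℤ) - 1
      · right; rw [hjt]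
      · left
        have : (j:ℤ) ≤ (K:ℤ) - 2 := by
          have : (j:ℤ) < (K:ℤ) - 1 := lt_of_le_of_ne hjK hjt
          linarith
        refine ⟨hn, ?_⟩
        nlinarith
  · rintro (⟨h0, h1⟩ | rfl)
    · set r := n % (q:ℤ) with hr
      have hr0 : 0 ≤ r := Int.emod_nonneg n (by linarith)
      have hrq : r < (q:ℤ) := Int.emod_lt_of_pos n hq'
      have hdiv : (q:ℤ) * (n / q) + r = n := Int.mul_ediv_add_emod n q
      have hd0 : 0 ≤ n / (q:ℤ) := Int.ediv_nonneg h0 (le_of_lt hq')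
      have hdK : n / (q:ℤ) < (K:ℤ) - 1 := by
        rw [Int.ediv_lt_iff_lt_mul hq']
        linarith
      by_cases hrb : r = (b:ℤ)
      · obtain ⟨k, hk, hRk⟩ := (hS (b:ℤ)).mpr (Or.inr rfl)
        refine ⟨h0, k, hk, (n / (q:ℤ)).toNat, ?_, ?_⟩
        · have : ((n / (q:ℤ)).toNat : ℤ) < (K:ℤ) := by
            rw [Int.toNat_of_nonneg hd0]; linarith
          exact_mod_cast this
        · rw [hRk, Int.toNat_of_nonneg hd0]
          linarith [hdiv, hrb]
      · obtain ⟨k, hk, hRk⟩ := (hS (r - (q:ℤ))).mpr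
          (Or.inl ⟨⟨by linarith, by linarith⟩, by
            intro h; apply hrb; linarith⟩)
        have hd1 : (0:ℤ) ≤ n / (q:ℤ) + 1 := by linarith
        refine ⟨h0, k, hk, (n / (q:ℤ) + 1).toNat, ?_, ?_⟩
        · have : ((n / (q:ℤ) + 1).toNat : ℤ) < (K:ℤ) := by
            rw [Int.toNat_of_nonneg hd1]; linarith
          exact_mod_cast this
        · rw [hRk, Int.toNat_of_nonneg hd1]
          ring_nf
          nlinarith [hdiv]
    · obtain ⟨k, hk, hRk⟩ := (hS (b:ℤ)).mpr (Or.inr rfl)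
      have hK1 : ((K - 1 : ℕ) : ℤ) = (K:ℤ) - 1 := by
        have : (1:ℕ) ≤ K := hK
        omega
      refine ⟨by nlinarith, k, hk, K - 1, by omega, ?_⟩
      rw [hRk, hK1]
end

section
/- For every integer r with 0 ≤ r < p there exists a (possibly empty) set S ⊆ {0,…,q−1} of skip indices such that r = Σ_{k∈S} ε(k); that is, every residue r < p is a sum of distinct skips ε(e₀) + ε(e₁) + … + ε(e_{j−1}) with e₀ < e₁ < … < e_{j−1} < q. -/
/-- every `r < p` is a sum of distinct skips `ε k` with `k < q`. -/
theorem exists_skip_decomposition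
    (p q : ℕ) (hp : 2 ≤ p) (hq : q = Nat.clog 2 p)
    (ε : ℕ → ℕ) (hεq : ε q = p)
    (hεrec : ∀ k, k < q → ε k = ε (k + 1) - ε (k + 1) / 2) :
    ∀ r, r < p → ∃ S : Finset ℕ, S ⊆ Finset.range q ∧ r = ∑ k ∈ S, ε k := by
  have hp2 : p ≤ 2 ^ q := by
    rw [hq]; exact Nat.le_pow_clog one_lt_two p
  have key : ∀ m k, k + m = q → ε k ≤ 2 ^ k := by
    intro m
    induction m with
    | zero => intro k hk; simp at hk; subst hk; omega
    | succ n ih =>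
      intro k hk
      have h1 : ε (k + 1) ≤ 2 ^ (k + 1) := ih (k + 1) (by omega)
      have hrec := hεrec k (by omega)
      have : (2 : ℕ) ^ (k + 1) = 2 * 2 ^ k := by ring
      omega
  have hε0 : ε 0 ≤ 1 := by simpa using key q 0 (by omega)
  have main : ∀ k, k ≤ q → ∀ r, r < ε k →
      ∃ S : Finset ℕ, S ⊆ Finset.range k ∧ r = ∑ i ∈ S, ε i := by
    intro k
    induction k with
    | zero =>
      intro _ r hr
      have : r = 0 := by omega
      exact ⟨∅, by simp, by simp [this]⟩
    | succ n ih =>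
      intro hn r hr
      by_cases h : r < ε n
      · obtain ⟨S, hS, hsum⟩ := ih (by omega) r h
        exact ⟨S, hS.trans (Finset.range_subset_range.2 (Nat.le_succ n)), hsum⟩
      · push_neg at h
        have hrec := hεrec n (by omega)
        have h2 : r - ε n < ε n := by omega
        obtain ⟨S, hS, hsum⟩ := ih (by omega) (r - ε n) h2
        have hnS : n ∉ S := by
          intro hmem
          have := hS hmem
          simp [Finset.mem_range] at this
        refine ⟨insert n S, ?_, ?_⟩
        · intro x hx
          rcases Finset.mem_insert.1 hx with rfl | hx
          · simp
          · have := hS hx; simp [Finset.mem_range] at this ⊢; omega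
        · rw [Finset.sum_insert hnS]
          omega
  intro r hr
  exact main q le_rfl r (by omega)
end

section
/- There are at most two indices k with 2 ≤ k ≤ q such that ε(k−2) + ε(k−1) = ε(k). -/
/-- there are at most two indices `k` with `2 ≤ k ≤ q` such that
`ε (k-2) + ε (k-1) = ε k`. -/
theorem at_most_two_tunnel_indices
    (p q : ℕ) (hp : 2 ≤ p) (hq : q = Nat.clog 2 p)
    (ε : ℕ → ℕ) (hεq : ε q = p)
    (hεrec : ∀ k, k < q → ε k = ε (k + 1) - ε (k + 1) / 2) :
    ((Finset.Icc 2 q).filter (fun k => ε (k - 2) + ε (k - 1) = ε k)).card ≤ 2 := by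
  -- lower bound: 2^k < 2 * ε k for all k ≤ q
  have hpq : 2 ^ (q - 1) < p := by
    rw [hq]; exact Nat.pow_pred_clog_lt_self one_lt_two (by omega)
  have hlb : ∀ d k, k + d = q → 2 ^ k < 2 * ε k := by
    intro d
    induction d with
    | zero =>
      intro k hk
      simp only [Nat.add_zero] at hk
      subst hk
      rw [hεq]
      rcases Nat.eq_zero_or_pos k with h0 | h0
      · subst h0; omega
      · have : 2 ^ k = 2 * 2 ^ (k - 1) := by
          rw [← pow_succ']; congr 1; omega
        omega
    | succ d ih =>
      intro k hk
      have h1 : 2 ^ (k + 1) < 2 * ε (k + 1) := ih (k + 1) (by omega)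
      have h2 : ε k = ε (k + 1) - ε (k + 1) / 2 := hεrec k (by omega)
      have h3 : 2 ^ (k + 1) = 2 * 2 ^ k := by ring
      omega
  have hsub : ((Finset.Icc 2 q).filter (fun k => ε (k - 2) + ε (k - 1) = ε k))
      ⊆ ({2, 3} : Finset ℕ) := by
    intro k hk
    simp only [Finset.mem_filter, Finset.mem_Icc] at hk
    obtain ⟨⟨hk2, hkq⟩, heq⟩ := hk
    have h1 : ε (k - 1) = ε k - ε k / 2 := by
      have := hεrec (k - 1) (by omega)
      rwa [show k - 1 + 1 = k by omega] at this
    have h2 : ε (k - 2) = ε (k - 1) - ε (k - 1) / 2 := by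
      have := hεrec (k - 2) (by omega)
      rwa [show k - 2 + 1 = k - 1 by omega] at this
    -- from the equation, ε k ≤ 5
    have hε : ε k ≤ 5 := by omega
    have hlbk : 2 ^ k < 2 * ε k := hlb (q - k) k (by omega)
    have hk3 : k ≤ 3 := by
      by_contra h
      have : 2 ^ 4 ≤ 2 ^ k := Nat.pow_le_pow_right (by norm_num) (by omega)
      have : (16 : ℕ) ≤ 2 ^ k := by norm_num at this ⊢; omega
      omega
    simp only [Finset.mem_insert, Finset.mem_singleton]
    omega
  calc ((Finset.Icc 2 q).filter (fun k => ε (k - 2) + ε (k - 1) = ε k)).card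
      ≤ ({2, 3} : Finset ℕ).card := Finset.card_le_card hsub
    _ ≤ 2 := by simp
end

section
/- For every index k with 2 ≤ k ≤ q, the equality ε(k−2) + ε(k−1) = ε(k) holds if and only if either k = 2 and ε(2) = 3, or k = 3 and ε(3) = 5. -/
/-- for `2 ≤ k ≤ q`, `ε (k-2) + ε (k-1) = ε k` holds iff
`k = 2 ∧ ε 2 = 3` or `k = 3 ∧ ε 3 = 5`. -/
theorem tunnel_characterization
    (p q : ℕ) (hp : 2 ≤ p) (hq : q = Nat.clog 2 p)
    (ε : ℕ → ℕ) (hεq : ε q = p)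
    (hεrec : ∀ k, k < q → ε k = ε (k + 1) - ε (k + 1) / 2) :
    ∀ k, 2 ≤ k → k ≤ q →
      (ε (k - 2) + ε (k - 1) = ε k ↔ (k = 2 ∧ ε 2 = 3) ∨ (k = 3 ∧ ε 3 = 5)) := by
  have hq1 : 1 ≤ q := hq ▸ Nat.clog_pos one_lt_two hp
  have key : ∀ d j, j + d = q → 2 ^ j < 2 * ε j ∧ ε j ≤ 2 ^ j := by
    intro d
    induction d with
    | zero =>
      intro j hj
      have hjq : j = q := by omega
      rw [hjq]
      constructor
      · have h1 : 2 ^ (q - 1) < p := by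
          rw [hq]; exact Nat.pow_pred_clog_lt_self one_lt_two hp
        have h2 : 2 ^ q = 2 * 2 ^ (q - 1) := by
          rw [← pow_succ']; congr 1; omega
        rw [hεq]; omega
      · rw [hεq, hq]; exact Nat.le_pow_clog one_lt_two p
    | succ d ih =>
      intro j hj
      obtain ⟨h1, h2⟩ := ih (j + 1) (by omega)
      have he : ε j = ε (j + 1) - ε (j + 1) / 2 := hεrec j (by omega)
      have hp2 : 2 ^ (j + 1) = 2 * 2 ^ j := by ring
      constructor <;> omega
  intro k hk2 hkq
  obtain ⟨hl, hu⟩ := key (q - k) k (by omega)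
  have h1 : ε (k - 1) = ε k - ε k / 2 := by
    have := hεrec (k - 1) (by omega)
    rwa [show k - 1 + 1 = k by omega] at this
  have h2 : ε (k - 2) = ε (k - 1) - ε (k - 1) / 2 := by
    have := hεrec (k - 2) (by omega)
    rwa [show k - 2 + 1 = k - 1 by omega] at this
  have h4 : (4 : ℕ) ≤ 2 ^ k := by
    calc (4 : ℕ) = 2 ^ 2 := by norm_num
    _ ≤ 2 ^ k := Nat.pow_le_pow_right (by norm_num) hk2
  constructor
  · intro h
    have hn : ε k = 3 ∨ ε k = 5 := by omega
    rcases hn with hn | hn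
    · have hk3 : k < 3 := by
        by_contra hc
        push_neg at hc
        have : (8 : ℕ) ≤ 2 ^ k := by
          calc (8 : ℕ) = 2 ^ 3 := by norm_num
          _ ≤ 2 ^ k := Nat.pow_le_pow_right (by norm_num) hc
        omega
      have : k = 2 := by omega
      subst this
      exact Or.inl ⟨rfl, hn⟩
    · have hk4 : k < 4 := by
        by_contra hc
        push_neg at hc
        have : (16 : ℕ) ≤ 2 ^ k := by
          calc (16 : ℕ) = 2 ^ 4 := by norm_num
          _ ≤ 2 ^ k := Nat.pow_le_pow_right (by norm_num) hc
        omega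
      have hk3 : 3 ≤ k := by
        by_contra hc
        push_neg at hc
        interval_cases k <;> simp_all <;> omega
      have : k = 3 := by omega
      subst this
      exact Or.inr ⟨rfl, hn⟩
  · rintro (⟨rfl, h3⟩ | ⟨rfl, h3⟩) <;> norm_num at h1 h2 ⊢ <;> omega
end

section
/- For every k with 0 ≤ k ≤ q it holds that 1 + Σ_{i=0}^{k−1} ε(i) ≥ ε(k); in particular (k = q) the sum of all skips satisfies 1 + Σ_{i=0}^{q−1} ε(i) ≥ p. -/
/-- `1 + Σ_{i<k} ε i ≥ ε k` for all `k ≤ q`; in particular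
`1 + Σ_{i<q} ε i ≥ p`. -/
theorem one_plus_prefix_sum_ge_skip
    (p q : ℕ) (hp : 2 ≤ p) (hq : q = Nat.clog 2 p)
    (ε : ℕ → ℕ) (hεq : ε q = p)
    (hεrec : ∀ k, k < q → ε k = ε (k + 1) - ε (k + 1) / 2) :
    (∀ k, k ≤ q → 1 + ∑ i ∈ Finset.range k, ε i ≥ ε k) ∧
    1 + ∑ i ∈ Finset.range q, ε i ≥ p := by
  -- bound: ε (q - j) ≤ 2 ^ (q - j)
  have hbound : ∀ j, j ≤ q → ε (q - j) ≤ 2 ^ (q - j) := by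
    intro j
    induction j with
    | zero =>
      intro _
      rw [Nat.sub_zero, hεq, hq]
      exact Nat.le_pow_clog one_lt_two p
    | succ j ih =>
      intro hjq
      have h1 : q - (j + 1) < q := by omega
      have h2 : q - (j + 1) + 1 = q - j := by omega
      have hrec := hεrec _ h1
      rw [h2] at hrec
      have hprev := ih (by omega)
      have hpow : 2 ^ (q - j) = 2 * 2 ^ (q - (j + 1)) := by
        rw [← pow_succ']
        congr 1
        omega
      omega
  have hε0 : ε 0 ≤ 1 := by
    have := hbound q le_rfl
    simpa using this
  have main : ∀ k, k ≤ q → 1 + ∑ i ∈ Finset.range k, ε i ≥ ε k := by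
    intro k
    induction k with
    | zero => intro _; simpa using hε0
    | succ k ih =>
      intro hk
      have hkq : k < q := hk
      have hrec := hεrec k hkq
      have hprev := ih (le_of_lt hkq)
      rw [Finset.sum_range_succ]
      omega
  exact ⟨main, hεq ▸ main q le_rfl⟩
end

section
/- For every k with 0 < k < q it holds that Σ_{i=0}^{k−2} ε(i) < ε(k) (where the sum is empty, hence 0, for k = 1). -/
lemma sum_two_pow (n : ℕ) : ∑ i ∈ Finset.range n, 2 ^ i = 2 ^ n - 1 := by
  induction n with
  | zero => simp
  | succ n ih =>
    rw [Finset.sum_range_succ, ih, pow_succ]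
    have : 1 ≤ 2 ^ n := Nat.one_le_two_pow
    omega

/-- `Σ_{i ≤ k-2} ε i < ε k` for `0 < k < q`. -/
theorem prefix_sum_lt_skip
    (p q : ℕ) (hp : 2 ≤ p) (hq : q = Nat.clog 2 p)
    (ε : ℕ → ℕ) (hεq : ε q = p)
    (hεrec : ∀ k, k < q → ε k = ε (k + 1) - ε (k + 1) / 2) :
    ∀ k, 0 < k → k < q → ∑ i ∈ Finset.range (k - 1), ε i < ε k := by
  have hq1 : 1 ≤ q := by
    rw [hq]; exact Nat.clog_pos one_lt_two hp
  have hple : p ≤ 2 ^ q := by rw [hq]; exact Nat.le_pow_clog one_lt_two p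
  have hplt : 2 ^ (q - 1) < p := by
    rw [hq]; exact Nat.pow_pred_clog_lt_self one_lt_two hp
  have h2q : 2 ^ q = 2 * 2 ^ (q - 1) := by
    rw [← pow_succ']
    congr 1
    omega
  have aux : ∀ d k, k + d = q → ε k ≤ 2 ^ k ∧ 2 ^ k < 2 * ε k := by
    intro d
    induction d with
    | zero =>
      intro k hk
      have : k = q := by omega
      subst this
      rw [hεq]
      omega
    | succ d ih =>
      intro k hk
      obtain ⟨h1, h2⟩ := ih (k + 1) (by omega)
      have hr := hεrec k (by omega)
      have hpk : 2 ^ (k + 1) = 2 * 2 ^ k := by rw [pow_succ]; ring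
      rw [hr]
      omega
  intro k hk0 hkq
  have hsum : ∑ i ∈ Finset.range (k - 1), ε i ≤ 2 ^ (k - 1) - 1 := by
    rw [← sum_two_pow]
    exact Finset.sum_le_sum fun i hi => (aux (q - i) i (by
      have := Finset.mem_range.mp hi; omega)).1
  have hk' := (aux (q - k) k (by omega)).2
  have hpk : 2 ^ k = 2 * 2 ^ (k - 1) := by
    rw [← pow_succ']; congr 1; omega
  have : 1 ≤ 2 ^ (k - 1) := Nat.one_le_two_pow
  omega
end

section
/- Let e and k be skip indices with 0 ≤ k < e < q, and let r be an integer. If ε(e) + ε(k) < r, then ε(e−i) + ε(k+i) < r for every i with 0 ≤ i ≤ e − k; equivalently, ε(e−i) + ε(k+i) ≤ ε(e) + ε(k) for every such i. -/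
/-- admissibility transfers: if `ε e + ε k < r` with `k < e < q`,
then `ε (e-i) + ε (k+i) < r` for all `0 ≤ i ≤ e - k`; equivalently
`ε (e-i) + ε (k+i) ≤ ε e + ε k` for all such `i`. -/
theorem admissibility_shift
    (p q : ℕ) (hp : 2 ≤ p) (hq : q = Nat.clog 2 p)
    (ε : ℕ → ℕ) (hεq : ε q = p)
    (hεrec : ∀ k, k < q → ε k = ε (k + 1) - ε (k + 1) / 2) :
    ∀ e k : ℕ, k < e → e < q →
      (∀ r : ℤ, ((ε e : ℤ) + (ε k : ℤ) < r →
        ∀ i, i ≤ e - k → (ε (e - i) : ℤ) + (ε (k + i) : ℤ) < r)) ∧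
      (∀ i, i ≤ e - k → ε (e - i) + ε (k + i) ≤ ε e + ε k) := by
  -- monotonicity
  have mono1 : ∀ j, j < q → ε j ≤ ε (j + 1) := by
    intro j hj
    rw [hεrec j hj]
    omega
  have mono : ∀ a b, a ≤ b → b ≤ q → ε a ≤ ε b := by
    intro a b hab hbq
    induction b with
    | zero => have : a = 0 := by omega
              simp [this]
    | succ n ih =>
      rcases Nat.eq_or_lt_of_le hab with h | h
      · rw [h]
      · exact le_trans (ih (by omega) (by omega)) (mono1 n (by omega))
  intro e k hke heq
  -- key step lemma for small i (2i ≤ e - k)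
  have aux : ∀ i, 2 * i ≤ e - k → ε (e - i) + ε (k + i) ≤ ε e + ε k := by
    intro i
    induction i with
    | zero => simp
    | succ n ih =>
      intro h2
      have hen : e - (n + 1) < q := by omega
      have hkn : k + n < q := by omega
      have h1 : ε (e - (n + 1)) = ε (e - n) - ε (e - n) / 2 := by
        have := hεrec (e - (n + 1)) hen
        have : e - (n + 1) + 1 = e - n := by omega
        rw [hεrec (e - (n + 1)) hen, this]
      have h2' : ε (k + n) = ε (k + n + 1) - ε (k + n + 1) / 2 :=
        hεrec (k + n) hkn
      have hm : ε (k + n + 1) ≤ ε (e - n) := mono _ _ (by omega) (by omega)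
      have hd : ε (k + n + 1) / 2 ≤ ε (e - n) / 2 := Nat.div_le_div_right hm
      have hd1 : ε (e - n) / 2 ≤ ε (e - n) := Nat.div_le_self _ _
      have hd2 : ε (k + n + 1) / 2 ≤ ε (k + n + 1) := Nat.div_le_self _ _
      have hprev : ε (e - n) + ε (k + n) ≤ ε e + ε k := ih (by omega)
      have : k + (n + 1) = k + n + 1 := by omega
      rw [this]
      omega
  have key : ∀ i, i ≤ e - k → ε (e - i) + ε (k + i) ≤ ε e + ε k := by
    intro i hi
    by_cases hc : 2 * i ≤ e - k
    · exact aux i hc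
    · have hj : 2 * (e - k - i) ≤ e - k := by omega
      have h1 : e - i = k + (e - k - i) := by omega
      have h2 : k + i = e - (e - k - i) := by omega
      rw [h1, h2, Nat.add_comm (ε (k + (e - k - i)))]
      exact aux (e - k - i) hj
  refine ⟨?_, key⟩
  intro r hr i hi
  have := key i hi
  omega
end
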